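/- The matrix M = -[[1,0,0,0,0],[0,1,0,0,0],[0,0,0,0,1],[0,0,0,1,0],[0,0,1,0,0]] and the matrix N = (1/3)*[[1,2,2,2,2],[1,-1,-1,2,-1],[1,-1,-1,-1,2],[1,-1,2,-1,-1],[1,2,-1,-1,-1]] both preserve the quartic form f(y0,...,y4) = y0*(y0^3+y1^3+y2^3+y3^3+y4^3)+3*y1*y2*y3*y4, in the sense that f((y0,...,y4)·M) = f(y0,...,y4) and f((y0,...,y4)·N) = f(y0,...,y4), over any field of characteristic different from 3. -/
import Mathlib

set_option maxHeartbeats 1000000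

/-- The Burkhardt quartic form as a function of the coordinate vector. -/
def burkhardtForm {k : Type} [Field k] (y : Fin 5 → k) : k :=
  y 0 * (y 0 ^ 3 + y 1 ^ 3 + y 2 ^ 3 + y 3 ^ 3 + y 4 ^ 3) + 3 * (y 1 * y 2 * y 3 * y 4)

/-- The two matrices `M = -[[1,0,0,0,0],[0,1,0,0,0],[0,0,0,0,1],[0,0,0,1,0],[0,0,1,0,0]]` and
`N = (1/3)·[[1,2,2,2,2],[1,-1,-1,2,-1],[1,-1,-1,-1,2],[1,-1,2,-1,-1],[1,2,-1,-1,-1]]` preserve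
the Burkhardt quartic form `f` under the right action on row vectors, over any field of
characteristic different from `3`. -/
theorem burkhardt_form_invariant (k : Type) [Field k] (h3 : (3 : k) ≠ 0) :
    let M : Matrix (Fin 5) (Fin 5) k :=
      -(!![1,0,0,0,0; 0,1,0,0,0; 0,0,0,0,1; 0,0,0,1,0; 0,0,1,0,0])
    let N : Matrix (Fin 5) (Fin 5) k :=
      (3 : k)⁻¹ • !![1,2,2,2,2; 1,-1,-1,2,-1; 1,-1,-1,-1,2; 1,-1,2,-1,-1; 1,2,-1,-1,-1]
    ∀ y : Fin 5 → k,
      burkhardtForm (Matrix.vecMul y M) = burkhardtForm y ∧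
      burkhardtForm (Matrix.vecMul y N) = burkhardtForm y := by
  intro M N y
  have hM : Matrix.vecMul y M = ![-(y 0), -(y 1), -(y 4), -(y 3), -(y 2)] := by
    funext i
    fin_cases i <;>
      simp [M, Matrix.vecMul, dotProduct, Fin.sum_univ_five, Matrix.vecHead,
        Matrix.vecTail]
  have hN : Matrix.vecMul y N =
      ![(3:k)⁻¹ * (y 0 + y 1 + y 2 + y 3 + y 4),
        (3:k)⁻¹ * (2*y 0 - y 1 - y 2 - y 3 + 2*y 4),
        (3:k)⁻¹ * (2*y 0 - y 1 - y 2 + 2*y 3 - y 4),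
        (3:k)⁻¹ * (2*y 0 + 2*y 1 - y 2 - y 3 - y 4),
        (3:k)⁻¹ * (2*y 0 - y 1 + 2*y 2 - y 3 - y 4)] := by
    funext i
    fin_cases i <;>
      · simp [N, Matrix.vecMul, dotProduct, Fin.sum_univ_five, Matrix.vecHead,
          Matrix.vecTail]
        ring
  rw [hM, hN]
  have ht : (3:k) * (3:k)⁻¹ = 1 := mul_inv_cancel₀ h3
  constructor <;>
    simp only [burkhardtForm, Matrix.cons_val_zero, Matrix.cons_val_one, Matrix.head_cons,
      Matrix.cons_val_two, Matrix.tail_cons, Matrix.cons_val_three, Matrix.cons_val_four,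
      Matrix.head_fin_const]
  · ring
  · linear_combination ((27*((3:k)⁻¹)^3 + 9*((3:k)⁻¹)^2 + 3*(3:k)⁻¹ + 1) *
      (y 0 * (y 0 ^ 3 + y 1 ^ 3 + y 2 ^ 3 + y 3 ^ 3 + y 4 ^ 3) + 3 * (y 1 * y 2 * y 3 * y 4))) * ht
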